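/- For every ν > 0 and every c > 0, the map r ↦ ν·r + H*(c·r) is a strictly increasing continuous bijection from ℝ onto ℝ; in particular the operator z ↦ ν·z + H*((σ²/2)·z) is pointwise invertible when |σ(x)| ≥ ρ > 0. -/

import Mathlib

open Set Filter

/-!
`H*` is the supremum of the affine maps `p ↦ p * u - h u` over `u ≥ 0`; the quadratic lower bound on
`h` makes this supremum finite. Each of these maps is nondecreasing (as `u ≥ 0`), so `H*` is monotone,
and as a real-valued supremum of affine maps it is convex, hence continuous. Therefore `r ↦ ν r + H*(c r)`
is continuous and strictly increasing, and it lies above `ν r + H*(0)` for `r ≥ 0` and below it for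
`r ≤ 0`, so it tends to `±∞` at `±∞` and is onto by the intermediate value theorem.
-/

/-- The Legendre conjugate of `H = h + indicator of [0,∞)`:
`H*(p) = sup { p·u − h(u) : u ∈ [0,∞) }`. -/
noncomputable def Hstar (h : ℝ → ℝ) (p : ℝ) : ℝ :=
  sSup ((fun u => p * u - h u) '' Set.Ici (0 : ℝ))

section Hstar

variable {h : ℝ → ℝ}

theorem bddAbove_image_Ici_of_quadratic_le {α₁ α₂ : ℝ} (hα₁ : 0 < α₁)
    (hlb : ∀ u : ℝ, α₁ * u ^ 2 + α₂ ≤ h u) (p : ℝ) :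
    BddAbove ((fun u => p * u - h u) '' Ici (0 : ℝ)) := by
  refine ⟨p ^ 2 / (4 * α₁) - α₂, ?_⟩
  rintro _ ⟨u, -, rfl⟩
  have hquad : p * u - α₁ * u ^ 2 ≤ p ^ 2 / (4 * α₁) := by
    rw [le_div_iff₀ (by positivity)]
    nlinarith [sq_nonneg (p - 2 * α₁ * u)]
  linarith [hlb u]

theorem le_Hstar {p u : ℝ} (hbdd : BddAbove ((fun u => p * u - h u) '' Ici (0 : ℝ)))
    (hu : 0 ≤ u) : p * u - h u ≤ Hstar h p :=
  le_csSup hbdd ⟨u, hu, rfl⟩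

theorem Hstar_le {p b : ℝ} (hb : ∀ u ≥ (0 : ℝ), p * u - h u ≤ b) : Hstar h p ≤ b :=
  csSup_le ⟨_, 0, self_mem_Ici, rfl⟩ (by rintro _ ⟨u, hu, rfl⟩; exact hb u hu)

theorem monotone_Hstar (hbdd : ∀ p, BddAbove ((fun u => p * u - h u) '' Ici (0 : ℝ))) :
    Monotone (Hstar h) :=
  fun _ q hpq => Hstar_le fun _ hu =>
    (sub_le_sub_right (mul_le_mul_of_nonneg_right hpq hu) _).trans (le_Hstar (hbdd q) hu)

theorem convexOn_Hstar (hbdd : ∀ p, BddAbove ((fun u => p * u - h u) '' Ici (0 : ℝ))) :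
    ConvexOn ℝ univ (Hstar h) := by
  refine ⟨convex_univ, fun p _ q _ a b ha hb hab => Hstar_le fun u hu => ?_⟩
  have hp := mul_le_mul_of_nonneg_left (le_Hstar (hbdd p) hu) ha
  have hq := mul_le_mul_of_nonneg_left (le_Hstar (hbdd q) hu) hb
  calc (a • p + b • q) * u - h u = a * (p * u - h u) + b * (q * u - h u) := by
        simp only [smul_eq_mul]; linear_combination h u * hab
    _ ≤ a • Hstar h p + b • Hstar h q := by simp only [smul_eq_mul]; linarith

theorem continuous_Hstar (hbdd : ∀ p, BddAbove ((fun u => p * u - h u) '' Ici (0 : ℝ))) :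
    Continuous (Hstar h) :=
  continuousOn_univ.mp ((convexOn_Hstar hbdd).continuousOn isOpen_univ)

end Hstar

section LinearPerturbation

variable {g : ℝ → ℝ} {ν : ℝ}

theorem strictMono_const_mul_add_of_monotone (hν : 0 < ν) (hg : Monotone g) :
    StrictMono fun r => ν * r + g r :=
  (strictMono_id.const_mul hν).add_monotone hg

theorem bijective_const_mul_add_of_monotone (hν : 0 < ν) (hg : Monotone g)
    (hgc : Continuous g) : Function.Bijective fun r => ν * r + g r := by
  refine ⟨(strictMono_const_mul_add_of_monotone hν hg).injective,
    ((continuous_const.mul continuous_id).add hgc).surjective ?_ ?_⟩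
  · exact tendsto_atTop_add_right_of_le' _ (g 0) (tendsto_id.const_mul_atTop hν)
      ((eventually_ge_atTop 0).mono fun r hr => hg hr)
  · exact tendsto_atBot_add_right_of_ge' _ (g 0) (tendsto_id.const_mul_atBot hν)
      ((eventually_le_atBot 0).mono fun r hr => hg hr)

end LinearPerturbation

theorem nu_id_add_hstar_bijective_general
    (h : ℝ → ℝ)
    (α₁ α₂ : ℝ) (hα₁ : 0 < α₁)
    (hlb : ∀ u : ℝ, α₁ * u ^ 2 + α₂ ≤ h u) :
    (∀ ν > (0 : ℝ), ∀ c > (0 : ℝ),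
      StrictMono (fun r : ℝ => ν * r + Hstar h (c * r)) ∧
      Continuous (fun r : ℝ => ν * r + Hstar h (c * r)) ∧
      Function.Bijective (fun r : ℝ => ν * r + Hstar h (c * r))) ∧
    (∀ ν > (0 : ℝ), ∀ (σ : ℝ → ℝ) (ρ : ℝ), 0 < ρ → (∀ x : ℝ, ρ ≤ |σ x|) →
      ∀ x : ℝ, Function.Bijective (fun z : ℝ => ν * z + Hstar h (σ x ^ 2 / 2 * z))) := by
  have hbdd := bddAbove_image_Ici_of_quadratic_le hα₁ hlb
  have scaled : ∀ ν > (0 : ℝ), ∀ c > (0 : ℝ),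
      StrictMono (fun r : ℝ => ν * r + Hstar h (c * r)) ∧
      Continuous (fun r : ℝ => ν * r + Hstar h (c * r)) ∧
      Function.Bijective (fun r : ℝ => ν * r + Hstar h (c * r)) := by
    intro ν hν c hc
    have hmono : Monotone fun r => Hstar h (c * r) :=
      (monotone_Hstar hbdd).comp (monotone_id.const_mul hc.le)
    have hcont : Continuous fun r => Hstar h (c * r) :=
      (continuous_Hstar hbdd).comp (continuous_const.mul continuous_id)
    exact ⟨strictMono_const_mul_add_of_monotone hν hmono,
      (continuous_const.mul continuous_id).add hcont,
      bijective_const_mul_add_of_monotone hν hmono hcont⟩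
  refine ⟨scaled, fun ν hν σ ρ hρ hσ x => (scaled ν hν _ ?_).2.2⟩
  have : σ x ≠ 0 := abs_pos.mp (hρ.trans_le (hσ x))
  positivity

theorem nu_id_add_hstar_bijective
    (h : ℝ → ℝ) (hconv : ConvexOn ℝ Set.univ h) (hcont : Continuous h)
    (α₁ α₂ : ℝ) (hα₁ : 0 < α₁) (hα₂ : 0 ≤ α₂)
    (hlb : ∀ u : ℝ, α₁ * u ^ 2 + α₂ ≤ h u) :
    (∀ ν > (0 : ℝ), ∀ c > (0 : ℝ),
      StrictMono (fun r : ℝ => ν * r + Hstar h (c * r)) ∧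
      Continuous (fun r : ℝ => ν * r + Hstar h (c * r)) ∧
      Function.Bijective (fun r : ℝ => ν * r + Hstar h (c * r))) ∧
    (∀ ν > (0 : ℝ), ∀ (σ : ℝ → ℝ) (ρ : ℝ), 0 < ρ → (∀ x : ℝ, ρ ≤ |σ x|) →
      ∀ x : ℝ, Function.Bijective (fun z : ℝ => ν * z + Hstar h (σ x ^ 2 / 2 * z))) :=
  nu_id_add_hstar_bijective_general h α₁ α₂ hα₁ hlb
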